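/- Let K be a finite nonempty type and, for each k ∈ K, let d k and e k be finite nonempty types with |d k| = d_k. Let ι := Σ k, (d k × e k) and let ρ ∈ Matrix ι ι ℂ be a positive semidefinite state. For each k, let ρ_{k,1} ∈ Matrix (d k) (d k) ℂ be the partial trace over e k of the k-th diagonal block of ρ, and ρ_{k,2} ∈ Matrix (e k) (e k) ℂ the partial trace over d k of the same block. Then Σ_k (H(ρ_{k,1}) − H(ρ_{k,2})) ≤ Real.log (max_k d_k). -/

import Mathlib

open scoped ComplexOrder

/-- The von Neumann entropy of a (positive semidefinite) matrix. -/
noncomputable def vNEntropy {n : Type*} [Fintype n] [DecidableEq n]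
    (ρ : Matrix n n ℂ) : ℝ :=
  (Matrix.trace (cfc Real.negMulLog ρ)).re

section Aux

open Matrix Finset

/-- Sum of positive semidefinite matrices is positive semidefinite. -/
lemma posSemidef_sum' {n α : Type*} [Fintype n] [Fintype α]
    (f : α → Matrix n n ℂ) (h : ∀ b, (f b).PosSemidef) :
    (∑ b, f b).PosSemidef := by
  classical
  refine Finset.sum_induction f Matrix.PosSemidef ?_ Matrix.PosSemidef.zero (fun b _ => h b)
  intro a b ha hb
  exact ha.add hb

/-- Generic "diagonal-block plus partial trace" PSD lemma. -/
lemma ptrace_posSemidef {ι α β : Type*} [Fintype ι] [DecidableEq ι]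
    [Fintype α] [DecidableEq α] [Fintype β]
    {ρ : Matrix ι ι ℂ} (hρ : ρ.PosSemidef) (m : α → β → ι) :
    (Matrix.of fun a a' : α => ∑ b : β, ρ (m a b) (m a' b)).PosSemidef := by
  classical
  have key : (Matrix.of fun a a' : α => ∑ b : β, ρ (m a b) (m a' b))
      = ∑ b : β, ((fun b : β => Matrix.of fun (i : ι) (a : α) =>
          if i = m a b then (1:ℂ) else 0) b)ᴴ * ρ *
          ((fun b : β => Matrix.of fun (i : ι) (a : α) =>
          if i = m a b then (1:ℂ) else 0) b) := by
    ext a a'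
    simp [Matrix.sum_apply, Matrix.mul_apply, Matrix.conjTranspose_apply,
      Matrix.of_apply, apply_ite (star : ℂ → ℂ), ite_mul, mul_ite,
      Finset.sum_ite_eq', Finset.sum_ite_eq]
  rw [key]
  exact posSemidef_sum' _ fun b => hρ.conjTranspose_mul_mul_same _

/-- Trace of a Hermitian matrix is the sum of its eigenvalues. -/
lemma trace_eq_sum_eigenvalues' {n : Type*} [Fintype n] [DecidableEq n]
    {A : Matrix n n ℂ} (hA : A.IsHermitian) :
    A.trace = ∑ i, (hA.eigenvalues i : ℂ) := by
  conv_lhs => rw [hA.spectral_theorem]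
  rw [Unitary.conjStarAlgAut_apply, Matrix.trace_mul_cycle]
  rw [show (star (Matrix.IsHermitian.eigenvectorUnitary hA : Matrix n n ℂ)) *
      (Matrix.IsHermitian.eigenvectorUnitary hA : Matrix n n ℂ) = 1 from
    Matrix.mem_unitaryGroup_iff'.mp (Matrix.IsHermitian.eigenvectorUnitary hA).2, one_mul,
    Matrix.trace_diagonal]
  rfl

/-- vNEntropy as sum of negMulLog of eigenvalues. -/
lemma vNEntropy_eq_sum {n : Type*} [Fintype n] [DecidableEq n]
    {A : Matrix n n ℂ} (hA : A.IsHermitian) :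
    vNEntropy A = ∑ i, Real.negMulLog (hA.eigenvalues i) := by
  unfold vNEntropy
  rw [hA.cfc_eq, Matrix.IsHermitian.cfc, Unitary.conjStarAlgAut_apply, Matrix.trace_mul_cycle]
  rw [show (star (Matrix.IsHermitian.eigenvectorUnitary hA : Matrix n n ℂ)) *
      (Matrix.IsHermitian.eigenvectorUnitary hA : Matrix n n ℂ) = 1 from
    Matrix.mem_unitaryGroup_iff'.mp (Matrix.IsHermitian.eigenvectorUnitary hA).2, one_mul,
    Matrix.trace_diagonal]
  simp [Complex.ofReal_re]

/-- Jensen upper bound for entropy of a subnormalized distribution. -/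
lemma sum_negMulLog_le {α : Type*} [Fintype α] [Nonempty α]
    (f : α → ℝ) (hf : ∀ i, 0 ≤ f i) :
    ∑ i, Real.negMulLog (f i) ≤
      Real.negMulLog (∑ i, f i) + (∑ i, f i) * Real.log (Fintype.card α) := by
  classical
  set n : ℝ := (Fintype.card α : ℝ) with hn
  have hn0 : 0 < n := by positivity
  set t : ℝ := ∑ i, f i with ht
  have ht0 : 0 ≤ t := Finset.sum_nonneg fun i _ => hf i
  -- Jensen with uniform weights
  have jensen : ∑ i, (1/n) • Real.negMulLog (f i) ≤ Real.negMulLog (∑ i, (1/n) • f i) := by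
    refine Real.concaveOn_negMulLog.le_map_sum (fun i _ => by positivity) ?_ (fun i _ => hf i)
    rw [Finset.sum_const, Finset.card_univ, nsmul_eq_mul]
    field_simp [hn]
    exact hn.symm
  have hsum : ∑ i, (1/n) • f i = t / n := by
    rw [← Finset.smul_sum]; simp [div_eq_inv_mul, ht]
  have hsum2 : ∑ i, (1/n) • Real.negMulLog (f i) = (1/n) * ∑ i, Real.negMulLog (f i) := by
    rw [← Finset.smul_sum]; simp
  rw [hsum, hsum2] at jensen
  have key : ∑ i, Real.negMulLog (f i) ≤ n * Real.negMulLog (t / n) := by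
    have := mul_le_mul_of_nonneg_left jensen (le_of_lt hn0)
    rwa [← mul_assoc, mul_one_div, div_self (ne_of_gt hn0), one_mul] at this
  refine key.trans ?_
  rcases eq_or_lt_of_le ht0 with h0 | htpos
  · simp [← h0, Real.negMulLog]
  · have heq : n * Real.negMulLog (t / n) = Real.negMulLog t + t * Real.log n := by
      rw [Real.negMulLog, Real.negMulLog, Real.log_div (ne_of_gt htpos) (ne_of_gt hn0)]
      field_simp
      ring
    rw [heq]

/-- Superadditivity-type lower bound. -/
lemma negMulLog_sum_le {α : Type*} [Fintype α]
    (f : α → ℝ) (hf : ∀ i, 0 ≤ f i) :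
    Real.negMulLog (∑ i, f i) ≤ ∑ i, Real.negMulLog (f i) := by
  classical
  set t : ℝ := ∑ i, f i with ht
  have ht0 : 0 ≤ t := Finset.sum_nonneg fun i _ => hf i
  have hle : ∀ i, f i * Real.log (f i) ≤ f i * Real.log t := by
    intro i
    rcases eq_or_lt_of_le (hf i) with h0 | hpos
    · simp [← h0]
    · have hfi : f i ≤ t := Finset.single_le_sum (fun j _ => hf j) (Finset.mem_univ i)
      exact mul_le_mul_of_nonneg_left (Real.log_le_log hpos hfi) (hf i)
  have h1 : ∑ i, f i * Real.log (f i) ≤ ∑ i, f i * Real.log t :=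
    Finset.sum_le_sum fun i _ => hle i
  calc Real.negMulLog t = -(∑ i, f i * Real.log t) := by
        rw [Real.negMulLog, ← Finset.sum_mul, ← ht]; ring
    _ ≤ -(∑ i, f i * Real.log (f i)) := neg_le_neg h1
    _ = ∑ i, Real.negMulLog (f i) := by
        rw [← Finset.sum_neg_distrib]
        exact Finset.sum_congr rfl fun i _ => by rw [Real.negMulLog]; ring

end Aux

/-- Coherent information of the peripheral projection is at most `log (max_k d_k)`:
for a state `ρ` on `Σ k, d k × e k`, with `ρ_{k,1}` the partial trace over `e k` and
`ρ_{k,2}` the partial trace over `d k` of the `k`-th diagonal block of `ρ`,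
`∑_k (H(ρ_{k,1}) − H(ρ_{k,2})) ≤ log (max_k |d k|)`. -/
theorem coherent_info_periph_le_log_max
    {K : Type*} [Fintype K] [DecidableEq K] [Nonempty K]
    (d e : K → Type*) [∀ k, Fintype (d k)] [∀ k, DecidableEq (d k)] [∀ k, Nonempty (d k)]
    [∀ k, Fintype (e k)] [∀ k, DecidableEq (e k)] [∀ k, Nonempty (e k)]
    (ρ : Matrix (Σ k, d k × e k) (Σ k, d k × e k) ℂ)
    (hρ : ρ.PosSemidef) (hρtr : ρ.trace = 1) :
    ∑ k, (vNEntropy (Matrix.of fun a a' : d k => ∑ b : e k, ρ ⟨k, (a, b)⟩ ⟨k, (a', b)⟩)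
          - vNEntropy (Matrix.of fun b b' : e k => ∑ a : d k, ρ ⟨k, (a, b)⟩ ⟨k, (a, b')⟩))
      ≤ Real.log ((Finset.univ.sup fun k : K => Fintype.card (d k) : ℕ) : ℝ) := by
  classical
  set M : ℕ := Finset.univ.sup fun k : K => Fintype.card (d k) with hM
  have hM1 : 1 ≤ M := by
    obtain ⟨k⟩ := ‹Nonempty K›
    exact le_trans Fintype.card_pos
      (Finset.le_sup (f := fun k : K => Fintype.card (d k)) (Finset.mem_univ k))
  -- per-k data
  have h1 : ∀ k : K, (Matrix.of fun a a' : d k =>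
      ∑ b : e k, ρ ⟨k, (a, b)⟩ ⟨k, (a', b)⟩).PosSemidef :=
    fun k => ptrace_posSemidef hρ (fun a b => ⟨k, (a, b)⟩)
  have h2 : ∀ k : K, (Matrix.of fun b b' : e k =>
      ∑ a : d k, ρ ⟨k, (a, b)⟩ ⟨k, (a, b')⟩).PosSemidef :=
    fun k => ptrace_posSemidef hρ (fun b a => ⟨k, (a, b)⟩)
  set t : K → ℝ := fun k => ∑ i, (h1 k).1.eigenvalues i with htdef
  have ht0 : ∀ k, 0 ≤ t k := fun k =>
    Finset.sum_nonneg fun i _ => (h1 k).eigenvalues_nonneg i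
  -- traces agree
  have htrace : ∀ k, ∑ i, ((h2 k).1.eigenvalues i : ℝ) = t k := by
    intro k
    have e1 := trace_eq_sum_eigenvalues' (h1 k).1
    have e2 := trace_eq_sum_eigenvalues' (h2 k).1
    have : (Matrix.of fun a a' : d k =>
        ∑ b : e k, ρ ⟨k, (a, b)⟩ ⟨k, (a', b)⟩).trace
        = (Matrix.of fun b b' : e k =>
        ∑ a : d k, ρ ⟨k, (a, b)⟩ ⟨k, (a, b')⟩).trace := by
      simp only [Matrix.trace, Matrix.diag, Matrix.of_apply]
      rw [Finset.sum_comm]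
    rw [e1, e2] at this
    have := congrArg Complex.re this
    simpa [htdef] using this.symm
  -- sum of t is 1
  have htsum : ∑ k, t k = 1 := by
    have : ρ.trace = ∑ k, (Matrix.of fun a a' : d k =>
        ∑ b : e k, ρ ⟨k, (a, b)⟩ ⟨k, (a', b)⟩).trace := by
      simp only [Matrix.trace, Matrix.diag, Matrix.of_apply]
      rw [← Finset.univ_sigma_univ, Finset.sum_sigma]
      exact Finset.sum_congr rfl fun k _ => Fintype.sum_prod_type _
    rw [hρtr] at this
    have h2' : ∀ k, (Matrix.of fun a a' : d k =>
        ∑ b : e k, ρ ⟨k, (a, b)⟩ ⟨k, (a', b)⟩).trace = (t k : ℂ) := by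
      intro k
      rw [trace_eq_sum_eigenvalues' (h1 k).1]
      push_cast [htdef]
      rfl
    rw [Finset.sum_congr rfl (fun k _ => h2' k)] at this
    have := congrArg Complex.re this.symm
    simpa using this
  -- per-k bound
  have key : ∀ k : K,
      vNEntropy (Matrix.of fun a a' : d k => ∑ b : e k, ρ ⟨k, (a, b)⟩ ⟨k, (a', b)⟩)
      - vNEntropy (Matrix.of fun b b' : e k => ∑ a : d k, ρ ⟨k, (a, b)⟩ ⟨k, (a, b')⟩)
      ≤ t k * Real.log M := by
    intro k
    rw [vNEntropy_eq_sum (h1 k).1, vNEntropy_eq_sum (h2 k).1]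
    have hub := sum_negMulLog_le ((h1 k).1.eigenvalues)
      (fun i => (h1 k).eigenvalues_nonneg i)
    have hlb := negMulLog_sum_le ((h2 k).1.eigenvalues)
      (fun i => (h2 k).eigenvalues_nonneg i)
    rw [htrace k] at hlb
    have step1 : ∑ i, Real.negMulLog ((h1 k).1.eigenvalues i)
        - ∑ i, Real.negMulLog ((h2 k).1.eigenvalues i)
        ≤ t k * Real.log (Fintype.card (d k)) := by
      have := sub_le_sub hub hlb
      simpa [htdef] using this
    refine step1.trans ?_
    refine mul_le_mul_of_nonneg_left ?_ (ht0 k)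
    have hcard : (Fintype.card (d k) : ℝ) ≤ (M : ℝ) := by
      exact_mod_cast Finset.le_sup (f := fun k : K => Fintype.card (d k)) (Finset.mem_univ k)
    exact Real.log_le_log (by exact_mod_cast Fintype.card_pos) hcard
  calc ∑ k, (vNEntropy (Matrix.of fun a a' : d k => ∑ b : e k, ρ ⟨k, (a, b)⟩ ⟨k, (a', b)⟩)
          - vNEntropy (Matrix.of fun b b' : e k => ∑ a : d k, ρ ⟨k, (a, b)⟩ ⟨k, (a, b')⟩))
      ≤ ∑ k, t k * Real.log M := Finset.sum_le_sum fun k _ => key k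
    _ = Real.log M := by rw [← Finset.sum_mul, htsum, one_mul]
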